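/- arXiv:alg-geom/9208004 — 4 statements merged into one kernel-verified Lean document; each statement's English description precedes it below -/
import Mathlib

section
/- For an odd prime p and any integer α with 1 ≤ α ≤ (p-1)/2, the sum ∑_{i=1}^{(p-1)/2} P(⟨αi/p⟩) equals (p²-1)/(12p), where P(x) = x(1-x) and ⟨x⟩ denotes the fractional part of x. -/
/-!
The function `x ↦ P(⟨x⟩)` is 1-periodic and even, so `P(⟨αi/p⟩) = P(|r_i|/p)` where `r_i` is the
absolutely least residue of `αi` modulo `p`. By the permutation underlying Gauss's lemma,
`i ↦ |r_i|` permutes `1, …, (p-1)/2`, so the sum is `∑ P(i/p)`, a polynomial sum in `i`.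
-/

/-- `P x = x(1-x)` -/
noncomputable def Ptor (x : ℝ) : ℝ := x * (1 - x)

open Finset

lemma Ptor_one_sub (x : ℝ) : Ptor (1 - x) = Ptor x := by
  unfold Ptor; ring

lemma Ptor_natAbs_valMinAbs_div {n : ℕ} [NeZero n] (x : ZMod n) :
    Ptor (x.valMinAbs.natAbs / n) = Ptor (x.val / n) := by
  have hn : (n : ℝ) ≠ 0 := NeZero.ne _
  rw [ZMod.valMinAbs_natAbs_eq_min]
  rcases min_cases x.val (n - x.val) with ⟨h, -⟩ | ⟨h, -⟩
  · rw [h]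
  · rw [h, Nat.cast_sub x.val_lt.le, sub_div, div_self hn, Ptor_one_sub]

lemma Ptor_fract_natCast_div (n a : ℕ) [NeZero n] :
    Ptor (Int.fract ((a : ℝ) / n)) = Ptor (((a : ZMod n).valMinAbs.natAbs : ℝ) / n) := by
  rw [Ptor_natAbs_valMinAbs_div, ZMod.val_natCast, Int.fract_div_natCast_eq_div_natCast_mod]

lemma sum_Icc_natAbs_valMinAbs_mul {M : Type*} [AddCommMonoid M] (p : ℕ) [Fact p.Prime]
    (a : ZMod p) (ha : a ≠ 0) (f : ℕ → M) :
    ∑ x ∈ Icc 1 (p / 2), f (a * x).valMinAbs.natAbs = ∑ x ∈ Icc 1 (p / 2), f x := by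
  have h := congrArg (Multiset.map f) (ZMod.Ico_map_valMinAbs_natAbs_eq_Ico_map_id p a ha)
  simp only [Multiset.map_map, Function.comp_def, Multiset.map_id'] at h
  rw [Nat.succ_eq_add_one, Ico_add_one_right_eq_Icc] at h
  simpa only [sum_eq_multiset_sum] using congrArg Multiset.sum h

lemma sum_Icc_mul_sub (n : ℝ) (k : ℕ) :
    6 * ∑ i ∈ Icc 1 k, (i : ℝ) * (n - i) = k * (k + 1) * (3 * n - 2 * k - 1) := by
  induction k with
  | zero => simp
  | succ k ih =>
    rw [sum_Icc_succ_top (by omega), mul_add, ih]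
    push_cast
    ring

lemma sum_Icc_Ptor_div_of_odd {p : ℕ} (hp : Odd p) :
    ∑ i ∈ Icc 1 (p / 2), Ptor (i / p) = ((p : ℝ) ^ 2 - 1) / (12 * p) := by
  obtain ⟨m, rfl⟩ := hp
  have hn : ((2 * m + 1 : ℕ) : ℝ) ≠ 0 := by positivity
  have hterm : ∀ i : ℕ, Ptor (i / (2 * m + 1 : ℕ))
      = (i : ℝ) * ((2 * m + 1 : ℕ) - i) / ((2 * m + 1 : ℕ) : ℝ) ^ 2 := by
    intro i
    unfold Ptor
    field_simp
  rw [show (2 * m + 1) / 2 = m by omega]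
  simp only [hterm, ← sum_div]
  have h := sum_Icc_mul_sub ((2 * m + 1 : ℕ) : ℝ) m
  push_cast at h hn ⊢
  field_simp
  linear_combination 2 * h

theorem sum_P_fract (p : ℕ) (hp : p.Prime) (hodd : Odd p)
    (α : ℕ) (h1 : 1 ≤ α) (h2 : α ≤ (p - 1) / 2) :
    ∑ i ∈ Finset.Icc 1 ((p - 1) / 2), Ptor (Int.fract ((α * i : ℝ) / p))
      = ((p : ℝ) ^ 2 - 1) / (12 * p) := by
  have := Fact.mk hp
  have hα : (α : ZMod p) ≠ 0 := by
    rw [Ne, ZMod.natCast_eq_zero_iff]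
    exact fun h => absurd (Nat.le_of_dvd h1 h) (by omega)
  rw [show (p - 1) / 2 = p / 2 by obtain ⟨m, rfl⟩ := hodd; omega]
  calc ∑ i ∈ Icc 1 (p / 2), Ptor (Int.fract ((α * i : ℝ) / p))
      = ∑ i ∈ Icc 1 (p / 2), Ptor (((α : ZMod p) * i).valMinAbs.natAbs / p) :=
        sum_congr rfl fun i _ => by exact_mod_cast Ptor_fract_natCast_div p (α * i)
    _ = ∑ i ∈ Icc 1 (p / 2), Ptor (i / p) :=
        sum_Icc_natAbs_valMinAbs_mul p _ hα fun k => Ptor (k / p)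
    _ = _ := sum_Icc_Ptor_div_of_odd hodd
end

section
/- For an odd prime p, the ((p-1)/2) × ((p-1)/2) matrix P_p whose (α,i) entry is P(⟨αi/p⟩), where P(x)=x(1-x) and ⟨x⟩ is the fractional part, is invertible. -/
/-- The matrix `P_p` with `(α,i)` entry `P(⟨αi/p⟩)`, `α,i ∈ {1,…,(p-1)/2}`. -/
noncomputable def Pmatrix (p : ℕ) : Matrix (Fin ((p - 1) / 2)) (Fin ((p - 1) / 2)) ℝ :=
  fun α i => Ptor (Int.fract ((((α : ℕ) + 1) * ((i : ℕ) + 1) : ℝ) / p))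

/-!
Put `F b = P(⟨b/p⟩)` on `ZMod p`, so that `P_p = (F (α i))` with `α, i` in the half system
`{1, …, (p-1)/2}`. A kernel vector `v` of `P_p` extends to an even function `Φ` on `ZMod p` whose
multiplicative convolution with `F` vanishes. Twisting by a Dirichlet character `χ` turns the
convolution into the product `(∑ₐ Φ a χ a) · (∑_γ χ⁻¹ γ F γ)`. For even `χ ≠ 1` the second factor
is `2 L(-1, χ⁻¹) / p`, which is nonzero by the functional equation since `L(χ, 2) ≠ 0`, and for
`χ = 1` it is a sum of positive terms; for odd `χ` the first factor vanishes because `Φ` is even.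
Hence every character sum of `Φ` vanishes, so `Φ = 0` on units and `v = 0`.
-/

open Finset

namespace DirichletCharacter

variable {n : ℕ}

lemma Even.inv {χ : DirichletCharacter ℂ n} (hχ : χ.Even) : χ⁻¹.Even := by
  rw [DirichletCharacter.Even, MulChar.inv_apply_eq_inv', hχ, inv_one]

variable [NeZero n]

lemma Odd.sum_mul_eq_zero {χ : DirichletCharacter ℂ n} (hχ : χ.Odd) {Φ : ZMod n → ℂ}
    (hΦ : Φ.Even) : ∑ a, Φ a * χ a = 0 := by
  have h : ∑ a, Φ a * χ a = -∑ a, Φ a * χ a := calc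
    _ = ∑ a, Φ (-a) * χ (-a) := (Equiv.sum_comp (Equiv.neg (ZMod n)) _).symm
    _ = _ := by simp [hΦ _, hχ.eval_neg]
  exact self_eq_neg.mp h

lemma eq_zero_of_forall_sum_mul_eq_zero {Φ : ZMod n → ℂ}
    (h : ∀ χ : DirichletCharacter ℂ n, ∑ a, Φ a * χ a = 0) {b : ZMod n} (hb : IsUnit b) :
    Φ b = 0 := by
  have key :
      ∑ χ : DirichletCharacter ℂ n, χ b⁻¹ * ∑ a, Φ a * χ a = Φ b * n.totient := by
    simp_rw [mul_sum, mul_left_comm _ (Φ _)]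
    rw [sum_comm]
    simp_rw [← mul_sum, sum_char_inv_mul_char_eq ℂ hb, mul_ite, mul_zero]
    rw [sum_ite_eq]
    simp
  have htot : (n.totient : ℂ) ≠ 0 := by exact_mod_cast (Nat.totient_pos.mpr (NeZero.pos n)).ne'
  simpa [h, htot] using key.symm

variable {p : ℕ} [Fact p.Prime]

lemma sum_mul_apply_mul_left (χ : DirichletCharacter ℂ p) {F : ZMod p → ℂ} (hF : F 0 = 0)
    (a : ZMod p) : ∑ β, χ β * F (a * β) = χ⁻¹ a * ∑ γ, χ γ * F γ := by
  rcases eq_or_ne a 0 with rfl | ha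
  · simp [hF, MulChar.map_zero]
  · calc ∑ β, χ β * F (a * β) = ∑ β, χ a⁻¹ * (χ (a * β) * F (a * β)) := by
          simp_rw [← mul_assoc, ← map_mul, inv_mul_cancel_left₀ ha]
      _ = χ⁻¹ a * ∑ γ, χ γ * F γ := by
          rw [← mul_sum, MulChar.inv_apply']
          exact congrArg _ (Equiv.sum_comp (Equiv.mulLeft₀ a ha) fun γ => χ γ * F γ)

lemma sum_mul_sum_mul_apply_mul (χ : DirichletCharacter ℂ p) (Φ : ZMod p → ℂ)
    {F : ZMod p → ℂ} (hF : F 0 = 0) :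
    ∑ β, χ β * ∑ a, Φ a * F (a * β) = (∑ a, Φ a * χ⁻¹ a) * ∑ γ, χ γ * F γ := by
  calc ∑ β, χ β * ∑ a, Φ a * F (a * β) = ∑ a, Φ a * ∑ β, χ β * F (a * β) := by
        simp_rw [mul_sum]
        rw [sum_comm]
        exact sum_congr rfl fun _ _ => sum_congr rfl fun _ _ => by ring
    _ = _ := by simp_rw [sum_mul_apply_mul_left χ hF, sum_mul, mul_assoc]

end DirichletCharacter

section HalfSystem

variable {p m : ℕ}

def halfSystem (p : ℕ) {m : ℕ} (i : Fin m) : ZMod p := ((i : ℕ) + 1 : ℕ)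

lemma halfSystem_ne_zero (hm : 2 * m + 1 = p) (i : Fin m) : halfSystem p i ≠ 0 := by
  rw [halfSystem, Ne, ZMod.natCast_eq_zero_iff]
  exact Nat.not_dvd_of_pos_of_lt i.succ_pos (by omega)

lemma halfSystem_ne_neg (hm : 2 * m + 1 = p) (i j : Fin m) :
    halfSystem p i ≠ -halfSystem p j := by
  rw [Ne, eq_neg_iff_add_eq_zero, halfSystem, halfSystem, ← Nat.cast_add,
    ZMod.natCast_eq_zero_iff]
  exact Nat.not_dvd_of_pos_of_lt (by omega) (by omega)

lemma halfSystem_injective (hm : 2 * m + 1 = p) : Function.Injective (halfSystem p (m := m)) := by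
  intro i j h
  rw [halfSystem, halfSystem, ZMod.natCast_eq_natCast_iff'] at h
  rw [Nat.mod_eq_of_lt (by omega), Nat.mod_eq_of_lt (by omega)] at h
  exact Fin.ext (by omega)

lemma exists_halfSystem_eq (hm : 2 * m + 1 = p) {β : ZMod p} (hβ : β ≠ 0) :
    ∃ α : Fin m, β = halfSystem p α ∨ β = -halfSystem p α := by
  have : NeZero p := ⟨by omega⟩
  have hpos : 0 < β.valMinAbs.natAbs := by simpa [ZMod.valMinAbs_eq_zero] using hβ
  have hle := ZMod.natAbs_valMinAbs_le β
  refine ⟨⟨β.valMinAbs.natAbs - 1, by omega⟩, ?_⟩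
  have h := ZMod.natCast_natAbs_valMinAbs β
  simp only [halfSystem, Nat.sub_add_cancel hpos, h]
  split_ifs
  · exact Or.inl rfl
  · exact Or.inr (neg_neg β).symm

end HalfSystem

section EvenExtension

variable {R ι : Type*} [AddGroup R] [DecidableEq R] [Fintype ι]

def evenExtension (e : ι → R) (v : ι → ℂ) (a : R) : ℂ :=
  ∑ i, v i * ((if a = e i then 1 else 0) + if a = -e i then 1 else 0)

lemma evenExtension_even (e : ι → R) (v : ι → ℂ) : (evenExtension e v).Even := by
  intro a
  simp only [evenExtension, neg_eq_iff_eq_neg, neg_neg]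
  exact sum_congr rfl fun i _ => by rw [add_comm]

lemma sum_evenExtension_mul [Fintype R] (e : ι → R) (v : ι → ℂ) (G : R → ℂ) :
    ∑ a, evenExtension e v a * G a = ∑ i, v i * (G (e i) + G (-e i)) := by
  simp only [evenExtension, sum_mul]
  rw [sum_comm]
  simp [add_mul, sum_add_distrib, mul_add]

lemma evenExtension_apply {e : ι → R} (he : Function.Injective e) (hne : ∀ i j, e i ≠ -e j)
    (v : ι → ℂ) (i : ι) : evenExtension e v (e i) = v i := by
  rw [evenExtension, sum_eq_single i]
  · simp [hne i i]
  · intro j _ hji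
    simp [he.ne_iff.mpr hji.symm, hne i j]
  · simp

end EvenExtension

section HalfSystemMatrix

open DirichletCharacter Matrix

variable {p m : ℕ} [Fact p.Prime] {F : ZMod p → ℂ}

lemma sum_evenExtension_mul_apply_mul_eq_zero (hm : 2 * m + 1 = p) (hF0 : F 0 = 0)
    (hF : F.Even) {v : Fin m → ℂ}
    (hv : (Matrix.of fun α i : Fin m => F (halfSystem p α * halfSystem p i)) *ᵥ v = 0)
    (β : ZMod p) :
    ∑ a, evenExtension (halfSystem p) v a * F (a * β) = 0 := by
  have hrow : ∀ α, ∑ i, v i * F (halfSystem p i * halfSystem p α) = 0 := fun α => by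
    refine Eq.trans (sum_congr rfl fun i _ => ?_) (congrFun hv α)
    rw [mul_comm, mul_comm (halfSystem p i)]
    rfl
  suffices h : ∑ i, v i * F (halfSystem p i * β) = 0 by
    rw [sum_evenExtension_mul]
    simp_rw [neg_mul, hF (_ * β), ← two_mul, mul_left_comm _ (2 : ℂ), ← mul_sum, h, mul_zero]
  rcases eq_or_ne β 0 with rfl | hβ
  · simp [hF0]
  obtain ⟨α, rfl | rfl⟩ := exists_halfSystem_eq hm hβ
  · exact hrow α
  · simpa only [mul_neg, hF (_ * _)] using hrow α

theorem isUnit_of_forall_even_sum_mul_ne_zero (hm : 2 * m + 1 = p) (hF0 : F 0 = 0)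
    (hF : F.Even) (hS : ∀ χ : DirichletCharacter ℂ p, χ.Even → ∑ γ, χ γ * F γ ≠ 0) :
    IsUnit (Matrix.of fun α i : Fin m => F (halfSystem p α * halfSystem p i)) := by
  rw [Matrix.isUnit_iff_isUnit_det, isUnit_iff_ne_zero]
  intro hdet
  obtain ⟨v, hv0, hv⟩ := Matrix.exists_mulVec_eq_zero_iff.mpr hdet
  apply hv0
  have hconv := sum_evenExtension_mul_apply_mul_eq_zero hm hF0 hF hv
  set Φ := evenExtension (halfSystem p) v
  have hchar : ∀ χ : DirichletCharacter ℂ p, ∑ a, Φ a * χ a = 0 := by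
    intro χ
    rcases χ.even_or_odd with hχ | hχ
    · have h := sum_mul_sum_mul_apply_mul χ⁻¹ Φ hF0
      simp only [hconv, mul_zero, sum_const_zero, inv_inv] at h
      exact (mul_eq_zero.mp h.symm).resolve_right (hS _ hχ.inv)
    · exact hχ.sum_mul_eq_zero (evenExtension_even _ _)
  funext i
  rw [← evenExtension_apply (halfSystem_injective hm) (halfSystem_ne_neg hm) v i]
  exact eq_zero_of_forall_sum_mul_eq_zero hchar (halfSystem_ne_zero hm i).isUnit

end HalfSystemMatrix

section Ptor

open Complex

lemma Ptor_nonneg {x : ℝ} (h0 : 0 ≤ x) (h1 : x ≤ 1) : 0 ≤ Ptor x :=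
  mul_nonneg h0 (by linarith)

lemma Ptor_pos {x : ℝ} (h0 : 0 < x) (h1 : x < 1) : 0 < Ptor x :=
  mul_pos h0 (by linarith)

-- `ζ(-1, x) = -B₂(x) / 2` with `B₂(x) = x² - x + 1/6`.
lemma hurwitzZeta_neg_one {x : ℝ} (hx : x ∈ Set.Icc 0 1) :
    HurwitzZeta.hurwitzZeta x (-1) = Ptor x / 2 - 1 / 12 := by
  have hB : bernoulli 2 = 1 / 6 := by
    rw [bernoulli_eq_bernoulli'_of_ne_one (by norm_num), bernoulli'_two]
  have h := HurwitzZeta.hurwitzZeta_neg_nat one_ne_zero hx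
  simp only [Nat.cast_one, Polynomial.bernoulli, sum_range_succ,
    Polynomial.map_add, Polynomial.map_monomial, Polynomial.eval_add, Polynomial.eval_monomial,
    bernoulli_one, hB] at h
  rw [h, Ptor]
  push_cast
  norm_num
  ring

noncomputable def zmodPtor (N : ℕ) (b : ZMod N) : ℂ := Ptor ((b.val : ℝ) / N)

variable {N : ℕ}

lemma zmodPtor_zero : zmodPtor N 0 = 0 := by
  simp [zmodPtor, Ptor]

lemma zmodPtor_even [NeZero N] : (zmodPtor N).Even := by
  intro b
  rcases eq_or_ne b 0 with rfl | hb
  · simp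
  have hN : (N : ℝ) ≠ 0 := NeZero.ne _
  rw [zmodPtor, zmodPtor, ZMod.neg_val, if_neg hb, Nat.cast_sub b.val_lt.le, Ptor, Ptor]
  congr 1
  field_simp
  ring

lemma ZMod.LFunction_neg_one [NeZero N] {Φ : ZMod N → ℂ} (hΦ : ∑ j, Φ j = 0) :
    ZMod.LFunction Φ (-1) = N / 2 * ∑ j, Φ j * zmodPtor N j := by
  have hx (j : ZMod N) : (j.val : ℝ) / N ∈ Set.Icc (0 : ℝ) 1 :=
    ⟨by positivity, div_le_one_of_le₀ (by exact_mod_cast j.val_lt.le) (by positivity)⟩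
  simp_rw [ZMod.LFunction, neg_neg, cpow_one, ZMod.toAddCircle_apply, hurwitzZeta_neg_one (hx _),
    mul_sub, sum_sub_distrib, ← sum_mul, hΦ, zero_mul, sub_zero, zmodPtor, mul_sum]
  exact sum_congr rfl fun j _ => by ring

end Ptor

namespace DirichletCharacter

open Complex

lemma Even.LFunction_neg_one_ne_zero {N : ℕ} [NeZero N] {χ : DirichletCharacter ℂ N}
    (hχ : χ.Even) (hprim : χ.IsPrimitive) (hroot : rootNumber χ ≠ 0) :
    χ.LFunction (-1) ≠ 0 := by
  have hN : (N : ℂ) ≠ 0 := NeZero.ne _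
  have hΓ : gammaFactor χ (-1) ≠ 0 := by
    rw [hχ.gammaFactor_def, Ne, Gammaℝ_eq_zero_iff]
    rintro ⟨n, hn⟩
    have : (1 : ℤ) = 2 * n := by exact_mod_cast neg_inj.mp hn
    omega
  have hΛ2 : completedLFunction χ⁻¹ 2 ≠ 0 := by
    intro h
    have hL := LFunction_eq_completed_div_gammaFactor χ⁻¹ 2 (Or.inl two_ne_zero)
    rw [h, zero_div] at hL
    exact LFunction_ne_zero_of_one_le_re χ⁻¹ (Or.inr (by norm_num)) (by norm_num) hL
  have hΛ : completedLFunction χ (-1) ≠ 0 := by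
    rw [show (-1 : ℂ) = 1 - 2 by norm_num, hprim.completedLFunction_one_sub]
    exact mul_ne_zero (mul_ne_zero (by simp [hN]) hroot) hΛ2
  rw [LFunction_eq_completed_div_gammaFactor χ (-1) (Or.inl (by norm_num))]
  exact div_ne_zero hΛ hΓ

variable {p : ℕ} [Fact p.Prime] {χ : DirichletCharacter ℂ p}

lemma isPrimitive_of_ne_one (hχ : χ ≠ 1) : χ.IsPrimitive := by
  rcases (Fact.out : p.Prime).eq_one_or_self_of_dvd _ χ.conductor_dvd_level with h | h
  · exact absurd (χ.eq_one_iff_conductor_eq_one.mpr h) hχ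
  · exact h

lemma rootNumber_ne_zero_of_ne_one (hχ : χ ≠ 1) : rootNumber χ ≠ 0 := by
  have hp : (p : ℂ) ≠ 0 := NeZero.ne _
  refine div_ne_zero (div_ne_zero ?_ (pow_ne_zero _ I_ne_zero)) (by simp [hp])
  exact gaussSum_ne_zero_of_nontrivial (by simpa using hp) hχ (ZMod.isPrimitive_stdAddChar p)

end DirichletCharacter

open Complex DirichletCharacter in
lemma sum_mul_zmodPtor_ne_zero {p : ℕ} [Fact p.Prime] {χ : DirichletCharacter ℂ p}
    (hχ : χ.Even) : ∑ γ, χ γ * zmodPtor p γ ≠ 0 := by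
  rcases eq_or_ne χ 1 with rfl | hχ1
  · have hp : (1 : ℝ) < p := by exact_mod_cast (Fact.out : p.Prime).one_lt
    have h : ∑ γ, (1 : DirichletCharacter ℂ p) γ * zmodPtor p γ
        = ((∑ γ : ZMod p, Ptor (γ.val / p) : ℝ) : ℂ) := by
      rw [ofReal_sum]
      refine sum_congr rfl fun γ _ => ?_
      rcases eq_or_ne γ 0 with rfl | hγ
      · simp [zmodPtor_zero, Ptor]
      · rw [MulChar.one_apply hγ.isUnit, one_mul, zmodPtor]
    rw [h, ofReal_ne_zero]
    refine (sum_pos' (fun γ _ => Ptor_nonneg (by positivity) ?_)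
      ⟨1, mem_univ _, Ptor_pos ?_ ?_⟩).ne'
    · exact div_le_one_of_le₀ (by exact_mod_cast γ.val_lt.le) (by positivity)
    · simpa [ZMod.val_one] using inv_pos.mpr (by linarith : (0 : ℝ) < p)
    · simpa [ZMod.val_one] using inv_lt_one_of_one_lt₀ hp
  · have h := hχ.LFunction_neg_one_ne_zero (isPrimitive_of_ne_one hχ1)
      (rootNumber_ne_zero_of_ne_one hχ1)
    rw [LFunction, ZMod.LFunction_neg_one (χ.sum_eq_zero_of_ne_one hχ1)] at h
    exact right_ne_zero_of_mul h

lemma Pmatrix_map_ofReal (p : ℕ) [NeZero p] :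
    (Pmatrix p).map ((↑) : ℝ → ℂ) =
      Matrix.of fun α i => zmodPtor p (halfSystem p α * halfSystem p i) := by
  ext α i
  rw [Matrix.map_apply, Matrix.of_apply, Pmatrix, zmodPtor, halfSystem, halfSystem,
    ← Nat.cast_mul, ZMod.val_natCast, ← Int.fract_div_natCast_eq_div_natCast_mod]
  push_cast
  rfl

theorem Pmatrix_invertible (p : ℕ) (hp : p.Prime) (hodd : Odd p) :
    IsUnit (Pmatrix p) := by
  have := Fact.mk hp
  have hm : 2 * ((p - 1) / 2) + 1 = p := by
    obtain ⟨k, rfl⟩ := hodd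
    omega
  have h := isUnit_of_forall_even_sum_mul_ne_zero hm zmodPtor_zero zmodPtor_even
    fun _ => sum_mul_zmodPtor_ne_zero
  rw [← Pmatrix_map_ofReal, Matrix.isUnit_iff_isUnit_det, isUnit_iff_ne_zero] at h
  rw [Matrix.isUnit_iff_isUnit_det, isUnit_iff_ne_zero]
  exact fun hdet => h <| (Complex.ofRealHom.map_det (Pmatrix p)).symm.trans (by simp [hdet])
end

section
/- Let p be an odd prime and let P_p be the ((p-1)/2)-square matrix with (α,i) entry P(⟨αi/p⟩), where P(x)=x(1-x). Then the constant vector with all entries equal to 2p/(p²-1) is a solution of the linear system P_p · X = (1/6)·𝟏, where 𝟏 is the all-ones vector. -/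
/-!
Since `P (1 - x) = P x`, the entry `P ⟨a i / p⟩` only depends on the least absolute residue
`|a i|` of `a i` modulo `p`, and, as in Gauss's lemma, `i ↦ |a i|` permutes `{1, …, (p - 1) / 2}`
when `p ∤ a`. Hence every row sum of `P_p` equals `∑_{k=1}^{m} k (p - k) / p² = (p² - 1) / (12 p)`,
where `p = 2m + 1`.
-/

open Finset

lemma Ptor_fract_div_eq_natAbs_valMinAbs (p : ℕ) [NeZero p] (n : ℕ) :
    Ptor (Int.fract ((n : ℝ) / p)) = Ptor ((n : ZMod p).valMinAbs.natAbs / p) := by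
  have hp : (p : ℝ) ≠ 0 := NeZero.ne _
  rw [Int.fract_div_natCast_eq_div_natCast_mod, ← ZMod.val_natCast,
    ZMod.valMinAbs_natAbs_eq_min]
  rcases min_choice (n : ZMod p).val (p - (n : ZMod p).val) with h | h
  · rw [h]
  · rw [h, Nat.cast_sub (ZMod.val_le _), sub_div, div_self hp, Ptor_one_sub]

lemma sum_Ico_natAbs_valMinAbs_mul {M : Type*} [AddCommMonoid M] (p : ℕ) [Fact p.Prime]
    {a : ZMod p} (ha : a ≠ 0) (g : ℕ → M) :
    ∑ x ∈ Ico 1 (p / 2).succ, g (a * x).valMinAbs.natAbs = ∑ x ∈ Ico 1 (p / 2).succ, g x := by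
  have := congrArg (fun s => (s.map g).sum) (ZMod.Ico_map_valMinAbs_natAbs_eq_Ico_map_id p a ha)
  simpa only [Multiset.map_map, Function.comp_def, sum_eq_multiset_sum] using this

lemma sum_range_succ_mul_sub (x : ℝ) (m : ℕ) :
    ∑ k ∈ range m, ((k : ℝ) + 1) * (x - (k + 1)) = m * (m + 1) * (3 * x - 2 * m - 1) / 6 := by
  induction m with
  | zero => simp
  | succ n ih => rw [sum_range_succ, ih]; push_cast; ring

lemma sum_Ico_Ptor_div (m : ℕ) :
    ∑ k ∈ Ico 1 (m + 1), Ptor (k / (2 * m + 1)) = m * (m + 1) / (3 * (2 * m + 1)) := by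
  have hp : (2 * m + 1 : ℝ) ≠ 0 := by positivity
  have hterm (k : ℝ) : Ptor (k / (2 * m + 1)) = k * ((2 * m + 1) - k) / (2 * m + 1) ^ 2 := by
    unfold Ptor; field_simp
  simp only [sum_Ico_eq_sum_range, add_tsub_cancel_right, hterm, ← sum_div]
  push_cast
  simp only [add_comm (1 : ℝ)]
  rw [sum_range_succ_mul_sub]
  field_simp
  ring

lemma sum_Pmatrix_row (p : ℕ) [Fact p.Prime] (hodd : Odd p) (α : Fin ((p - 1) / 2)) :
    ∑ i, Pmatrix p α i = ∑ k ∈ Ico 1 (p / 2).succ, Ptor (k / p) := by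
  have hp : p / 2 = (p - 1) / 2 := by obtain ⟨m, rfl⟩ := hodd; omega
  have ha : (((α : ℕ) + 1 : ℕ) : ZMod p) ≠ 0 := by
    rw [Ne, ZMod.natCast_eq_zero_iff]
    exact Nat.not_dvd_of_pos_of_lt (Nat.succ_pos _) (by omega)
  rw [← sum_Ico_natAbs_valMinAbs_mul p ha, sum_Ico_eq_sum_range, Nat.succ_sub_one, hp,
    ← Fin.sum_univ_eq_sum_range]
  refine sum_congr rfl fun i _ => ?_
  have := Ptor_fract_div_eq_natAbs_valMinAbs p (((α : ℕ) + 1) * (1 + i))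
  push_cast at this ⊢
  rw [Pmatrix, ← this, add_comm 1 (i : ℝ)]

theorem const_vector_solves (p : ℕ) (hp : p.Prime) (hodd : Odd p) :
    (Pmatrix p).mulVec (fun _ => 2 * (p : ℝ) / ((p : ℝ) ^ 2 - 1))
      = fun _ => 1 / 6 := by
  have := Fact.mk hp
  funext α
  rw [Matrix.mulVec, dotProduct, ← sum_mul, sum_Pmatrix_row p hodd]
  obtain ⟨m, rfl⟩ := hodd
  have hm : (2 * m + 1) / 2 = m := by omega
  have hm_pos : (1 : ℝ) ≤ m := by have := α.isLt; norm_cast; omega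
  rw [hm, Nat.succ_eq_add_one]
  push_cast
  rw [sum_Ico_Ptor_div, show (2 * m + 1 : ℝ) ^ 2 - 1 = 4 * m * (m + 1) by ring]
  field_simp
  ring
end

section
/- Let m₁,…,m_s be positive integers, k₁,…,k_s integers, and χ an integer. Suppose ∑_j k_j(1 - k_j/m_j) = 2χ and ∑_j k_j = cχ with c ∈ {3,4}. Then ∑_j ((m_j - 1)/(2m_j))·k_j² is an integer. -/
theorem divisibility (s : ℕ) (m : Fin s → ℕ) (k : Fin s → ℤ) (χ : ℤ) (c : ℚ)
    (hm : ∀ j, 1 ≤ m j)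
    (hc : c = 3 ∨ c = 4)
    (hquad : ∑ j, (k j : ℚ) * (1 - (k j : ℚ) / (m j : ℚ)) = 2 * χ)
    (hsum : ∑ j, (k j : ℚ) = c * χ) :
    ∃ z : ℤ, ∑ j, (((m j : ℚ) - 1) / (2 * (m j : ℚ))) * (k j : ℚ) ^ 2 = (z : ℚ) := by
  have hm0 : ∀ j, (m j : ℚ) ≠ 0 := fun j =>
    Nat.cast_ne_zero.mpr (by have := hm j; omega)
  -- ∑ k²/m = (c-2)χ
  have hS : ∑ j, (k j : ℚ) ^ 2 / (m j : ℚ) = (c - 2) * χ := by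
    have h1 : ∑ j, ((k j : ℚ) - (k j : ℚ) ^ 2 / (m j : ℚ)) = 2 * χ := by
      rw [← hquad]
      refine Finset.sum_congr rfl fun j _ => ?_
      field_simp [hm0 j]
    rw [Finset.sum_sub_distrib, hsum] at h1
    linarith
  -- parity: ∑ (k² - k) is even
  have hev : Even (∑ j, ((k j) ^ 2 - k j)) := by
    refine Finset.sum_induction _ Even (fun a b => Even.add) Even.zero fun j _ => ?_
    have : (k j) ^ 2 - k j = (k j - 1) * ((k j - 1) + 1) := by ring
    rw [this]
    exact Int.even_mul_succ_self _
  obtain ⟨r, hr⟩ := hev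
  have hrQ : ∑ j, ((k j : ℚ) ^ 2 - (k j : ℚ)) = 2 * r := by
    have := congrArg (fun n : ℤ => (n : ℚ)) hr
    push_cast at this
    rw [this]; ring
  rw [Finset.sum_sub_distrib, hsum] at hrQ
  -- rewrite the target
  have heq : ∑ j, (((m j : ℚ) - 1) / (2 * (m j : ℚ))) * (k j : ℚ) ^ 2
      = (∑ j, (k j : ℚ) ^ 2) / 2 - (∑ j, (k j : ℚ) ^ 2 / (m j : ℚ)) / 2 := by
    rw [Finset.sum_div, Finset.sum_div, ← Finset.sum_sub_distrib]
    refine Finset.sum_congr rfl fun j _ => ?_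
    field_simp [hm0 j]
  refine ⟨r + χ, ?_⟩
  rw [heq, hS]
  push_cast
  linarith
end
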